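/- For every x ∈ X and every 0 < r < 1, the measure of the δ_D-ball B_{δ_D}(x,r) satisfies r/B ≤ μ(B_{δ_D}(x,r)) < r; that is, (X, δ_D, μ) is 1-Ahlfors regular. -/
import Mathlib


open MeasureTheory Set

/-- A dyadic family with inheritance coefficient `B` on a probability space `(X, μ)`:
nested finite partitions `cubes j` of `X` into measurable sets of positive measure,
`cubes 0 = {univ}`, each cube at level `j+1` strictly contained in a unique cube
(its first ancestor) at level `j`, and `μ(ancestor) ≤ B · μ(child)`. -/
structure DyadicFamily {X : Type*} [MeasurableSpace X] (μ : MeasureTheory.Measure X)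
    (B : ℝ) where
  cubes : ℕ → Set (Set X)
  finiteLevel : ∀ j, (cubes j).Finite
  meas : ∀ j, ∀ Q ∈ cubes j, MeasurableSet Q
  zeroth : cubes 0 = {Set.univ}
  cover : ∀ j, ⋃₀ cubes j = Set.univ
  pdisjoint : ∀ j, (cubes j).PairwiseDisjoint id
  posMeasure : ∀ j, ∀ Q ∈ cubes j, 0 < μ Q
  ancestor : ∀ j, ∀ Q ∈ cubes (j + 1), ∃! P, P ∈ cubes j ∧ Q ⊂ P
  inherit : ∀ j, ∀ Q ∈ cubes (j + 1), ∀ P ∈ cubes j, Q ⊂ P →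
    (μ P).toReal ≤ B * (μ Q).toReal
  prob : μ Set.univ = 1

namespace DyadicFamily

variable {X : Type*} [MeasurableSpace X] {μ : MeasureTheory.Measure X} {B : ℝ}

/-- Membership in the dyadic family: `Q` is a cube of some level. -/
def Mem (D : DyadicFamily μ B) (Q : Set X) : Prop := ∃ j, Q ∈ D.cubes j

/-- The offspring of a cube `Q` of level `j`: the cubes of level `j+1`
strictly contained in `Q` (equivalently, whose first ancestor is `Q`). -/
def offspring (D : DyadicFamily μ B) (j : ℕ) (Q : Set X) : Set (Set X) :=
  {Q' ∈ D.cubes (j + 1) | Q' ⊂ Q}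

/-- The pseudo-ultrametric `δ_D(x,y) = inf {μ(Q) : x, y ∈ Q ∈ D}`. -/
noncomputable def delta (D : DyadicFamily μ B) (x y : X) : ℝ :=
  sInf {r : ℝ | ∃ Q, D.Mem Q ∧ x ∈ Q ∧ y ∈ Q ∧ r = (μ Q).toReal}

/-- The distance between two dyadic cubes via the smallest common dyadic ancestor. -/
noncomputable def cubeDist (D : DyadicFamily μ B) (Q₁ Q₂ : Set X) : ℝ :=
  sInf {r : ℝ | ∃ P, D.Mem P ∧ Q₁ ∪ Q₂ ⊆ P ∧ r = (μ P).toReal}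

/-- Mean value of `f` over `Q`. -/
noncomputable def avg (μ : MeasureTheory.Measure X) (f : X → ℝ) (Q : Set X) : ℝ :=
  ((μ Q).toReal)⁻¹ * ∫ x in Q, f x ∂μ

/-- `f` belongs to `V_{j,Q}`: it vanishes outside `Q` and is constant on each
offspring cube of `Q`. -/
def MemV (D : DyadicFamily μ B) (j : ℕ) (Q : Set X) (f : X → ℝ) : Prop :=
  (∀ Q' ∈ D.offspring j Q, ∃ c : ℝ, ∀ x ∈ Q', f x = c) ∧ ∀ x ∉ Q, f x = 0

end DyadicFamily

namespace DyadicFamily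

variable {X : Type*} [MeasurableSpace X] {μ : MeasureTheory.Measure X} {B : ℝ}

lemma exists_cube (D : DyadicFamily μ B) (j : ℕ) (x : X) :
    ∃ Q, Q ∈ D.cubes j ∧ x ∈ Q := by
  have h : x ∈ ⋃₀ D.cubes j := by rw [D.cover j]; exact Set.mem_univ x
  obtain ⟨Q, hQ, hxQ⟩ := h
  exact ⟨Q, hQ, hxQ⟩

/-- The unique cube of level `j` containing `x`. -/
noncomputable def cub (D : DyadicFamily μ B) (x : X) (j : ℕ) : Set X :=
  (D.exists_cube j x).choose

lemma cub_mem (D : DyadicFamily μ B) (x : X) (j : ℕ) : D.cub x j ∈ D.cubes j :=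
  (D.exists_cube j x).choose_spec.1

lemma mem_cub (D : DyadicFamily μ B) (x : X) (j : ℕ) : x ∈ D.cub x j :=
  (D.exists_cube j x).choose_spec.2

lemma cube_unique (D : DyadicFamily μ B) {j : ℕ} {Q Q' : Set X} {z : X}
    (hQ : Q ∈ D.cubes j) (hQ' : Q' ∈ D.cubes j) (hz : z ∈ Q) (hz' : z ∈ Q') :
    Q = Q' := by
  by_contra hne
  exact Set.disjoint_left.mp (D.pdisjoint j hQ hQ' hne) hz hz'

lemma eq_cub (D : DyadicFamily μ B) {j : ℕ} {Q : Set X} {x : X}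
    (hQ : Q ∈ D.cubes j) (hx : x ∈ Q) : Q = D.cub x j :=
  D.cube_unique hQ (D.cub_mem x j) hx (D.mem_cub x j)

lemma cub_zero (D : DyadicFamily μ B) (x : X) : D.cub x 0 = Set.univ := by
  have := D.cub_mem x 0
  rwa [D.zeroth, Set.mem_singleton_iff] at this

lemma measure_ne_top (D : DyadicFamily μ B) {j : ℕ} {Q : Set X} (hQ : Q ∈ D.cubes j) :
    μ Q ≠ ⊤ := by
  have h1 : μ Q ≤ 1 := by
    rw [← D.prob]; exact measure_mono (Set.subset_univ Q)
  exact ne_top_of_le_ne_top ENNReal.one_ne_top h1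

lemma cub_ssubset (D : DyadicFamily μ B) (x : X) (j : ℕ) :
    D.cub x (j + 1) ⊂ D.cub x j := by
  obtain ⟨P, ⟨hP, hQP⟩, _⟩ := D.ancestor j _ (D.cub_mem x (j + 1))
  have hxP : x ∈ P := hQP.subset (D.mem_cub x (j + 1))
  rwa [D.eq_cub hP hxP] at hQP

lemma cub_subset_of_le (D : DyadicFamily μ B) (x : X) {j k : ℕ} (h : j ≤ k) :
    D.cub x k ⊆ D.cub x j := by
  induction k with
  | zero => simp_all
  | succ k ih =>
    rcases Nat.le_succ_iff_eq_or_le.mp h with h' | h'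
    · exact h' ▸ subset_rfl
    · exact (D.cub_ssubset x k).subset.trans (ih h')

lemma cub_decay (D : DyadicFamily μ B) (hB : 2 ≤ B) (x : X) (j : ℕ) :
    (μ (D.cub x (j + 1))).toReal ≤ (1 - 1 / B) * (μ (D.cub x j)).toReal := by
  have hB0 : (0 : ℝ) < B := lt_of_lt_of_le (by norm_num) hB
  set Q' := D.cub x (j + 1) with hQ'def
  set Q := D.cub x j with hQdef
  have hss : Q' ⊂ Q := D.cub_ssubset x j
  obtain ⟨z, hzQ, hzQ'⟩ := Set.exists_of_ssubset hss
  obtain ⟨R, hR, hzR⟩ := D.exists_cube (j + 1) z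
  have hRne : R ≠ Q' := fun h => hzQ' (h ▸ hzR)
  obtain ⟨P, ⟨hP, hRP⟩, _⟩ := D.ancestor j R hR
  have hPQ : P = Q := D.cube_unique hP (D.cub_mem x j) (hRP.subset hzR) hzQ
  have hRQ : R ⊂ Q := hPQ ▸ hRP
  -- inherit : μ Q ≤ B μ R
  have hinh : (μ Q).toReal ≤ B * (μ R).toReal :=
    D.inherit j R hR Q (D.cub_mem x j) hRQ
  -- disjointness and additivity
  have hdisj : Disjoint Q' R :=
    D.pdisjoint (j + 1) (D.cub_mem x (j + 1)) hR (Ne.symm hRne)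
  have hunion : μ Q' + μ R ≤ μ Q := by
    rw [← measure_union hdisj (D.meas (j + 1) R hR)]
    exact measure_mono (Set.union_subset hss.subset hRQ.subset)
  have hfin' : μ Q' ≠ ⊤ := D.measure_ne_top (D.cub_mem x (j + 1))
  have hfinR : μ R ≠ ⊤ := D.measure_ne_top hR
  have hfinQ : μ Q ≠ ⊤ := D.measure_ne_top (D.cub_mem x j)
  have hreal : (μ Q').toReal + (μ R).toReal ≤ (μ Q).toReal := by
    rw [← ENNReal.toReal_add hfin' hfinR]
    exact ENNReal.toReal_le_toReal (ENNReal.add_ne_top.mpr ⟨hfin', hfinR⟩) hfinQ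
      |>.mpr hunion
  have hRlb : (μ Q).toReal / B ≤ (μ R).toReal := by
    rw [div_le_iff₀ hB0]
    linarith [hinh, mul_comm B (μ R).toReal]
  have h1 : (1 - 1 / B) * (μ Q).toReal = (μ Q).toReal - (μ Q).toReal / B := by
    field_simp
  linarith

lemma cub_pow (D : DyadicFamily μ B) (hB : 2 ≤ B) (x : X) (j : ℕ) :
    (μ (D.cub x j)).toReal ≤ (1 - 1 / B) ^ j := by
  have hB0 : (0 : ℝ) < B := lt_of_lt_of_le (by norm_num) hB
  have hc0 : (0 : ℝ) ≤ 1 - 1 / B := by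
    have : 1 / B ≤ 1 / 2 := by
      apply one_div_le_one_div_of_le <;> linarith
    linarith
  induction j with
  | zero => simp [D.cub_zero, D.prob]
  | succ j ih =>
    calc (μ (D.cub x (j + 1))).toReal ≤ (1 - 1 / B) * (μ (D.cub x j)).toReal :=
          D.cub_decay hB x j
      _ ≤ (1 - 1 / B) * (1 - 1 / B) ^ j := by
          exact mul_le_mul_of_nonneg_left ih hc0
      _ = (1 - 1 / B) ^ (j + 1) := by ring

lemma exists_small (D : DyadicFamily μ B) (hB : 2 ≤ B) (x : X) {r : ℝ} (hr : 0 < r) :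
    ∃ j, (μ (D.cub x j)).toReal < r := by
  have hB0 : (0 : ℝ) < B := lt_of_lt_of_le (by norm_num) hB
  have hc0 : (0 : ℝ) ≤ 1 - 1 / B := by
    have : 1 / B ≤ 1 / 2 := by
      apply one_div_le_one_div_of_le <;> linarith
    linarith
  have hc1 : (1 - 1 / B) < 1 := by
    have : 0 < 1 / B := by positivity
    linarith
  have htend := tendsto_pow_atTop_nhds_zero_of_lt_one hc0 hc1
  obtain ⟨j, hj⟩ := ((htend.eventually (gt_mem_nhds hr)).exists)
  exact ⟨j, lt_of_le_of_lt (D.cub_pow hB x j) hj⟩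

end DyadicFamily


/-- For every `x` and `0 < r < 1`, `r/B ≤ μ(B_{δ_D}(x,r)) < r`:
the space `(X, δ_D, μ)` is 1-Ahlfors regular. -/
theorem ball_measure_ahlfors {X : Type*} [MeasurableSpace X]
    {μ : MeasureTheory.Measure X} {B : ℝ} (hB : 2 ≤ B) (D : DyadicFamily μ B)
    (x : X) (r : ℝ) (hr0 : 0 < r) (hr1 : r < 1) :
    r / B ≤ (μ {y : X | D.delta x y < r}).toReal ∧
      (μ {y : X | D.delta x y < r}).toReal < r := by
  classical
  have hB0 : (0 : ℝ) < B := lt_of_lt_of_le (by norm_num) hB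
  have hex : ∃ j, (μ (D.cub x j)).toReal < r := D.exists_small hB x hr0
  set j₀ := Nat.find hex with hj₀def
  have hj₀ : (μ (D.cub x j₀)).toReal < r := Nat.find_spec hex
  -- the set defining delta x y
  have hSbdd : ∀ y : X, BddBelow {s : ℝ | ∃ Q, D.Mem Q ∧ x ∈ Q ∧ y ∈ Q ∧ s = (μ Q).toReal} := by
    intro y
    refine ⟨0, fun s hs => ?_⟩
    obtain ⟨Q, _, _, _, hs⟩ := hs
    rw [hs]; exact ENNReal.toReal_nonneg
  have hSne : ∀ y : X, {s : ℝ | ∃ Q, D.Mem Q ∧ x ∈ Q ∧ y ∈ Q ∧ s = (μ Q).toReal}.Nonempty := by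
    intro y
    refine ⟨(μ (Set.univ : Set X)).toReal, Set.univ, ⟨0, ?_⟩, Set.mem_univ x,
      Set.mem_univ y, rfl⟩
    rw [D.zeroth]; rfl
  -- ball equals cub x j₀
  have hball : {y : X | D.delta x y < r} = D.cub x j₀ := by
    ext y
    simp only [Set.mem_setOf_eq, DyadicFamily.delta]
    constructor
    · intro h
      obtain ⟨s, hs, hsr⟩ := (csInf_lt_iff (hSbdd y) (hSne y)).mp h
      obtain ⟨Q, ⟨j, hQj⟩, hxQ, hyQ, hseq⟩ := hs
      have hQc : Q = D.cub x j := D.eq_cub hQj hxQ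
      have hjr : (μ (D.cub x j)).toReal < r := by rw [← hQc, ← hseq]; exact hsr
      have : j₀ ≤ j := Nat.find_le hjr
      exact D.cub_subset_of_le x this (hQc ▸ hyQ)
    · intro hy
      have hmem : (μ (D.cub x j₀)).toReal ∈
          {s : ℝ | ∃ Q, D.Mem Q ∧ x ∈ Q ∧ y ∈ Q ∧ s = (μ Q).toReal} :=
        ⟨D.cub x j₀, ⟨j₀, D.cub_mem x j₀⟩, D.mem_cub x j₀, hy, rfl⟩
      exact lt_of_le_of_lt (csInf_le (hSbdd y) hmem) hj₀
  rw [hball]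
  refine ⟨?_, hj₀⟩
  -- lower bound
  have hj₀pos : j₀ ≠ 0 := by
    intro h
    rw [h] at hj₀
    rw [D.cub_zero, D.prob] at hj₀
    simp at hj₀
    linarith
  obtain ⟨k, hk⟩ : ∃ k, j₀ = k + 1 := ⟨j₀ - 1, (Nat.succ_pred_eq_of_pos (Nat.pos_of_ne_zero hj₀pos)).symm⟩
  have hkmin : ¬ (μ (D.cub x k)).toReal < r := Nat.find_min hex (by omega)
  push_neg at hkmin
  have hinh : (μ (D.cub x k)).toReal ≤ B * (μ (D.cub x (k + 1))).toReal :=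
    D.inherit k _ (D.cub_mem x (k + 1)) _ (D.cub_mem x k) (D.cub_ssubset x k)
  rw [hk]
  rw [div_le_iff₀ hB0]
  calc r ≤ (μ (D.cub x k)).toReal := hkmin
    _ ≤ B * (μ (D.cub x (k + 1))).toReal := hinh
    _ = (μ (D.cub x (k + 1))).toReal * B := mul_comm _ _
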